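/- arXiv:2112.09093 — 2 statements merged into one kernel-verified Lean document; each statement's English description precedes it below -/
import Mathlib

section
/- The NRF pair internally stabilizes the augmented plant (part (III) of the proof of Theorem 3): Let (M, N, M̃, Ñ, X, Y, X̃, Ỹ) be a DCF of the p×m matrix G over RatFunc ℝ, let Q be an m×p matrix with X_Q := X + Q·M̃ and Y_Q := Y − Q·Ñ, assume Y_Q and Y_Q^diag are invertible, and define Φ := I_m − (Y_Q^diag)⁻¹·Y_Q and Γ := (Y_Q^diag)⁻¹·X_Q. Then I_m − Φ is invertible, the matrix I_m + (I_m − Φ)⁻¹·Γ·G is invertible, and (I_m + (I_m − Φ)⁻¹·Γ·G)⁻¹·(I_m − Φ)⁻¹ = M·Y_Q^diag; consequently (I_m + (I_m − Φ)⁻¹·Γ·G)⁻¹·(I_m − Φ)⁻¹·[I_m, Φ, Γ] = M·[Y_Q^diag, Y_Q^diag − Y_Q, X_Q]. If in addition all eight DCF matrices and Q are stable, then the matrices M·Y_Q^diag, M·(Y_Q^diag − Y_Q), M·X_Q, N·Y_Q^diag, N·(Y_Q^diag − Y_Q), and N·X_Q are all stable. -/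
/-!
The Youla-parametrised Bézout identity `Y_Q M + X_Q N = I` together with `G M = N` gives
`M⁻¹ = Y_Q + X_Q G`. Since `I - Φ = (Y_Q^diag)⁻¹ Y_Q`, this turns the loop matrix into
`I + (I - Φ)⁻¹ Γ G = Y_Q⁻¹ (Y_Q + X_Q G) = (M Y_Q)⁻¹`, so the closed loop is
`M Y_Q · Y_Q⁻¹ Y_Q^diag = M Y_Q^diag`. Stability of the six products holds because the
denominator of a sum or product divides the product of the denominators, so stable rational
functions form a subring of `RatFunc ℝ`.
-/

open Matrix Polynomial

noncomputable section

def RFStable (f : RatFunc ℝ) : Prop :=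
  ∀ z : ℂ, aeval z f.denom = 0 → z.re < 0

def MatStable {a b : Type*} (G : Matrix a b (RatFunc ℝ)) : Prop :=
  ∀ i j, RFStable (G i j)

theorem RFStable.of_denom_eq_one {f : RatFunc ℝ} (h : f.denom = 1) : RFStable f := by
  simp [RFStable, h]

theorem RFStable.of_denom_dvd_mul {f g h : RatFunc ℝ} (hd : f.denom ∣ g.denom * h.denom)
    (hg : RFStable g) (hh : RFStable h) : RFStable f := by
  intro z hz
  obtain ⟨c, hc⟩ := hd
  have : aeval z g.denom * aeval z h.denom = 0 := by
    rw [← _root_.map_mul, hc, _root_.map_mul, hz, zero_mul]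
  rcases mul_eq_zero.mp this with h0 | h0
  exacts [hg z h0, hh z h0]

def stableRatFunc : Subring (RatFunc ℝ) where
  carrier := {f | RFStable f}
  zero_mem' := RFStable.of_denom_eq_one RatFunc.denom_zero
  one_mem' := RFStable.of_denom_eq_one RatFunc.denom_one
  add_mem' hf hg := RFStable.of_denom_dvd_mul (RatFunc.denom_add_dvd _ _) hf hg
  mul_mem' hf hg := RFStable.of_denom_dvd_mul (RatFunc.denom_mul_dvd _ _) hf hg
  neg_mem' {f} hf := by
    have hneg : -f = algebraMap (Polynomial ℝ) (RatFunc ℝ) (-1) * f := by simp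
    rw [Set.mem_ofPred_eq, hneg]
    exact RFStable.of_denom_dvd_mul (RatFunc.denom_mul_dvd _ _)
      (RFStable.of_denom_eq_one (RatFunc.denom_algebraMap _)) hf

namespace MatStable

variable {a b c : Type*}

theorem add {A B : Matrix a b (RatFunc ℝ)} (hA : MatStable A) (hB : MatStable B) :
    MatStable (A + B) :=
  fun i j => stableRatFunc.add_mem (hA i j) (hB i j)

theorem sub {A B : Matrix a b (RatFunc ℝ)} (hA : MatStable A) (hB : MatStable B) :
    MatStable (A - B) :=
  fun i j => stableRatFunc.sub_mem (hA i j) (hB i j)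

theorem mul [Fintype b] {A : Matrix a b (RatFunc ℝ)} {B : Matrix b c (RatFunc ℝ)}
    (hA : MatStable A) (hB : MatStable B) : MatStable (A * B) :=
  fun i j => stableRatFunc.sum_mem fun k _ => stableRatFunc.mul_mem (hA i k) (hB k j)

theorem diagonal_diag [DecidableEq a] {A : Matrix a a (RatFunc ℝ)} (hA : MatStable A) :
    MatStable (diagonal A.diag) := by
  intro i j
  by_cases hij : i = j
  · subst hij; simpa using hA i i
  · simpa [hij] using RFStable.of_denom_eq_one RatFunc.denom_zero

end MatStable

theorem youla_bezout {R m p : Type*} [Ring R] [Fintype m] [Fintype p] [DecidableEq m]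
    [DecidableEq p] {M Y : Matrix m m R} {N Nt : Matrix p m R} {Mt Yt : Matrix p p R}
    {X Xt : Matrix m p R}
    (hBez : fromBlocks Y X (-Nt) Mt * fromBlocks M (-Xt) N Yt = 1) (Q : Matrix m p R) :
    (Y - Q * Nt) * M + (X + Q * Mt) * N = 1 := by
  rw [fromBlocks_multiply, ← fromBlocks_one, fromBlocks_inj] at hBez
  obtain ⟨h11, -, h21, -⟩ := hBez
  have hcomm : Mt * N = Nt * M := by
    rw [Matrix.neg_mul, neg_add_eq_zero] at h21; exact h21.symm
  rw [Matrix.sub_mul, Matrix.add_mul, Matrix.mul_assoc, Matrix.mul_assoc Q, hcomm, ← h11]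
  abel

section

variable {R m p : Type*} [CommRing R] [Fintype m] [DecidableEq m] [Fintype p]

theorem inv_eq_add_mul_of_mul_add_mul_eq_one {M YQ : Matrix m m R} {N G : Matrix p m R}
    {XQ : Matrix m p R} (hBez : YQ * M + XQ * N = 1) (hGM : G * M = N) :
    M⁻¹ = YQ + XQ * G :=
  inv_eq_left_inv (by rw [Matrix.add_mul, Matrix.mul_assoc, hGM, hBez])

theorem inv_inv_mul_of_isUnit {D : Matrix m m R} (A : Matrix m m R) (hD : IsUnit D) :
    (D⁻¹ * A)⁻¹ = A⁻¹ * D := by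
  rw [Matrix.mul_inv_rev, nonsing_inv_nonsing_inv _ ((isUnit_iff_isUnit_det D).mp hD)]

variable {D M YQ : Matrix m m R} {XQ : Matrix m p R} {G : Matrix p m R}

theorem one_add_inv_mul_mul_eq_inv (hD : IsUnit D) (hYQ : IsUnit YQ)
    (hM : M⁻¹ = YQ + XQ * G) :
    1 + (D⁻¹ * YQ)⁻¹ * (D⁻¹ * XQ) * G = (M * YQ)⁻¹ := by
  have hDd := (isUnit_iff_isUnit_det D).mp hD
  have hYQd := (isUnit_iff_isUnit_det YQ).mp hYQ
  rw [inv_inv_mul_of_isUnit _ hD, Matrix.mul_assoc YQ⁻¹, mul_nonsing_inv_cancel_left _ _ hDd,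
    Matrix.mul_inv_rev, hM, Matrix.mul_add, nonsing_inv_mul _ hYQd, Matrix.mul_assoc]

theorem inv_one_add_inv_mul_mul_mul_inv_eq (hD : IsUnit D) (hYQ : IsUnit YQ) (hMu : IsUnit M)
    (hM : M⁻¹ = YQ + XQ * G) :
    (1 + (D⁻¹ * YQ)⁻¹ * (D⁻¹ * XQ) * G)⁻¹ * (D⁻¹ * YQ)⁻¹ = M * D := by
  rw [one_add_inv_mul_mul_eq_inv hD hYQ hM, inv_inv_mul_of_isUnit _ hD,
    nonsing_inv_nonsing_inv _ ((isUnit_iff_isUnit_det _).mp (hMu.mul hYQ)), Matrix.mul_assoc,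
    mul_nonsing_inv_cancel_left _ _ ((isUnit_iff_isUnit_det YQ).mp hYQ)]

end

theorem nrf_stabilizes_augmented_plant_general {m p : ℕ}
    (G : Matrix (Fin p) (Fin m) (RatFunc ℝ))
    (M : Matrix (Fin m) (Fin m) (RatFunc ℝ)) (N : Matrix (Fin p) (Fin m) (RatFunc ℝ))
    (Mt : Matrix (Fin p) (Fin p) (RatFunc ℝ)) (Nt : Matrix (Fin p) (Fin m) (RatFunc ℝ))
    (X : Matrix (Fin m) (Fin p) (RatFunc ℝ)) (Y : Matrix (Fin m) (Fin m) (RatFunc ℝ))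
    (Xt : Matrix (Fin m) (Fin p) (RatFunc ℝ)) (Yt : Matrix (Fin p) (Fin p) (RatFunc ℝ))
    (hMinv : IsUnit M)
    (hGr : G = N * M⁻¹)
    (hBez : Matrix.fromBlocks Y X (-Nt) Mt * Matrix.fromBlocks M (-Xt) N Yt = 1)
    (Q : Matrix (Fin m) (Fin p) (RatFunc ℝ))
    (XQ : Matrix (Fin m) (Fin p) (RatFunc ℝ)) (hXQ : XQ = X + Q * Mt)
    (YQ : Matrix (Fin m) (Fin m) (RatFunc ℝ)) (hYQ : YQ = Y - Q * Nt)
    (hYQinv : IsUnit YQ)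
    (Ydiag : Matrix (Fin m) (Fin m) (RatFunc ℝ))
    (hYdiag : Ydiag = Matrix.diagonal fun i => YQ i i)
    (hYdiagInv : IsUnit Ydiag)
    (Φ : Matrix (Fin m) (Fin m) (RatFunc ℝ)) (hΦ : Φ = 1 - Ydiag⁻¹ * YQ)
    (Γ : Matrix (Fin m) (Fin p) (RatFunc ℝ)) (hΓ : Γ = Ydiag⁻¹ * XQ) :
    IsUnit (1 - Φ) ∧
    IsUnit (1 + (1 - Φ)⁻¹ * Γ * G) ∧
    (1 + (1 - Φ)⁻¹ * Γ * G)⁻¹ * (1 - Φ)⁻¹ = M * Ydiag ∧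
    (1 + (1 - Φ)⁻¹ * Γ * G)⁻¹ * (1 - Φ)⁻¹ *
        Matrix.fromCols (Matrix.fromCols 1 Φ) Γ =
      M * Matrix.fromCols (Matrix.fromCols Ydiag (Ydiag - YQ)) XQ ∧
    ((MatStable M ∧ MatStable N ∧ MatStable Mt ∧ MatStable Nt ∧
      MatStable X ∧ MatStable Y ∧ MatStable Xt ∧ MatStable Yt ∧ MatStable Q) →
     (MatStable (M * Ydiag) ∧ MatStable (M * (Ydiag - YQ)) ∧ MatStable (M * XQ) ∧
      MatStable (N * Ydiag) ∧ MatStable (N * (Ydiag - YQ)) ∧ MatStable (N * XQ))) := by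
  have hDd := (isUnit_iff_isUnit_det Ydiag).mp hYdiagInv
  have hGM : G * M = N := by
    rw [hGr, nonsing_inv_mul_cancel_right _ _ ((isUnit_iff_isUnit_det M).mp hMinv)]
  have hMinvEq : M⁻¹ = YQ + XQ * G := by
    rw [hYQ, hXQ]
    exact inv_eq_add_mul_of_mul_add_mul_eq_one (youla_bezout hBez Q) hGM
  have hOneSub : 1 - Φ = Ydiag⁻¹ * YQ := by rw [hΦ, sub_sub_cancel]
  have hLoop := one_add_inv_mul_mul_eq_inv (G := G) hYdiagInv hYQinv hMinvEq
  have hClosed := inv_one_add_inv_mul_mul_mul_inv_eq hYdiagInv hYQinv hMinv hMinvEq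
  rw [← hOneSub, ← hΓ] at hLoop hClosed
  refine ⟨hOneSub ▸ (isUnit_nonsing_inv_iff.mpr hYdiagInv).mul hYQinv,
    hLoop ▸ isUnit_nonsing_inv_iff.mpr (hMinv.mul hYQinv), hClosed, ?_, ?_⟩
  · rw [hClosed, Matrix.mul_assoc]
    congr 1
    rw [mul_fromCols, mul_fromCols, Matrix.mul_one, hΦ, hΓ, Matrix.mul_sub, Matrix.mul_one,
      mul_nonsing_inv_cancel_left _ _ hDd, mul_nonsing_inv_cancel_left _ _ hDd]
  · rintro ⟨hM, hN, hMt, hNt, hX, hY, -, -, hQ⟩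
    have hYQs : MatStable YQ := hYQ ▸ hY.sub (hQ.mul hNt)
    have hXQs : MatStable XQ := hXQ ▸ hX.add (hQ.mul hMt)
    have hDs : MatStable Ydiag := hYdiag ▸ hYQs.diagonal_diag
    exact ⟨hM.mul hDs, hM.mul (hDs.sub hYQs), hM.mul hXQs,
      hN.mul hDs, hN.mul (hDs.sub hYQs), hN.mul hXQs⟩

/-- **The NRF pair internally stabilizes the augmented plant (part (III) of the
proof of Theorem 3).** -/
theorem nrf_stabilizes_augmented_plant {m p : ℕ}
    (G : Matrix (Fin p) (Fin m) (RatFunc ℝ))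
    (M : Matrix (Fin m) (Fin m) (RatFunc ℝ)) (N : Matrix (Fin p) (Fin m) (RatFunc ℝ))
    (Mt : Matrix (Fin p) (Fin p) (RatFunc ℝ)) (Nt : Matrix (Fin p) (Fin m) (RatFunc ℝ))
    (X : Matrix (Fin m) (Fin p) (RatFunc ℝ)) (Y : Matrix (Fin m) (Fin m) (RatFunc ℝ))
    (Xt : Matrix (Fin m) (Fin p) (RatFunc ℝ)) (Yt : Matrix (Fin p) (Fin p) (RatFunc ℝ))
    (hMinv : IsUnit M) (hMtinv : IsUnit Mt)
    (hGr : G = N * M⁻¹) (hGl : G = Mt⁻¹ * Nt)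
    (hBez : Matrix.fromBlocks Y X (-Nt) Mt * Matrix.fromBlocks M (-Xt) N Yt = 1)
    (Q : Matrix (Fin m) (Fin p) (RatFunc ℝ))
    (XQ : Matrix (Fin m) (Fin p) (RatFunc ℝ)) (hXQ : XQ = X + Q * Mt)
    (YQ : Matrix (Fin m) (Fin m) (RatFunc ℝ)) (hYQ : YQ = Y - Q * Nt)
    (hYQinv : IsUnit YQ)
    (Ydiag : Matrix (Fin m) (Fin m) (RatFunc ℝ))
    (hYdiag : Ydiag = Matrix.diagonal fun i => YQ i i)
    (hYdiagInv : IsUnit Ydiag)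
    (Φ : Matrix (Fin m) (Fin m) (RatFunc ℝ)) (hΦ : Φ = 1 - Ydiag⁻¹ * YQ)
    (Γ : Matrix (Fin m) (Fin p) (RatFunc ℝ)) (hΓ : Γ = Ydiag⁻¹ * XQ) :
    IsUnit (1 - Φ) ∧
    IsUnit (1 + (1 - Φ)⁻¹ * Γ * G) ∧
    (1 + (1 - Φ)⁻¹ * Γ * G)⁻¹ * (1 - Φ)⁻¹ = M * Ydiag ∧
    (1 + (1 - Φ)⁻¹ * Γ * G)⁻¹ * (1 - Φ)⁻¹ *
        Matrix.fromCols (Matrix.fromCols 1 Φ) Γ =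
      M * Matrix.fromCols (Matrix.fromCols Ydiag (Ydiag - YQ)) XQ ∧
    ((MatStable M ∧ MatStable N ∧ MatStable Mt ∧ MatStable Nt ∧
      MatStable X ∧ MatStable Y ∧ MatStable Xt ∧ MatStable Yt ∧ MatStable Q) →
     (MatStable (M * Ydiag) ∧ MatStable (M * (Ydiag - YQ)) ∧ MatStable (M * XQ) ∧
      MatStable (N * Ydiag) ∧ MatStable (N * (Ydiag - YQ)) ∧ MatStable (N * XQ))) :=
  nrf_stabilizes_augmented_plant_general G M N Mt Nt X Y Xt Yt hMinv hGr hBez Q XQ hXQ YQ hYQ hYQinv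
    Ydiag hYdiag hYdiagInv Φ hΦ Γ hΓ
end
end

section
/- Failure of internal stability for the state-iteration-based implementation (Theorem 5): Let (M, N, M̃, Ñ, X, Y, X̃, Ỹ) be a DCF of the p×m matrix G over RatFunc ℝ, let Q be an m×p matrix with X_Q := X + Q·M̃, Y_Q := Y − Q·Ñ, X̃_Q := X̃ + M·Q, Ỹ_Q := Ỹ − N·Q, and assume Ỹ_Q and Ω := (Ỹ_Q·M̃)^diag are invertible. Suppose the disturbance-free signals z, β ∈ (RatFunc ℝ)^p and u, w ∈ (RatFunc ℝ)^m satisfy Ỹ_Q·M̃·z + Ỹ_Q·Ñ·u = −Ỹ_Q·Ñ·w, Ω⁻¹·(I_p − Ỹ_Q·M̃)·z + Ω⁻¹·Ỹ_Q·M̃·β = 0, and X̃_Q·M̃·z − X̃_Q·M̃·β − u = 0. Then β = (G − N·Y_Q)·w, i.e., the closed-loop map from the input disturbance w to the controller state β equals G − N·Y_Q. Moreover, if all entries of N and Y_Q are stable and some entry of G has an unstable pole, then some entry of G − N·Y_Q has an unstable pole (so the implementation is not internally stable). -/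
open Matrix Polynomial

noncomputable section

lemma RFStable.add {f g : RatFunc ℝ} (hf : RFStable f) (hg : RFStable g) :
    RFStable (f + g) := by
  intro z hz
  obtain ⟨c, hc⟩ := RatFunc.denom_add_dvd f g
  have : (aeval z f.denom) * (aeval z g.denom) = 0 := by
    rw [← _root_.map_mul, hc, _root_.map_mul, hz, zero_mul]
  rcases mul_eq_zero.mp this with h | h
  · exact hf z h
  · exact hg z h

lemma RFStable.mul {f g : RatFunc ℝ} (hf : RFStable f) (hg : RFStable g) :
    RFStable (f * g) := by
  intro z hz
  obtain ⟨c, hc⟩ := RatFunc.denom_mul_dvd f g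
  have : (aeval z f.denom) * (aeval z g.denom) = 0 := by
    rw [← _root_.map_mul, hc, _root_.map_mul, hz, zero_mul]
  rcases mul_eq_zero.mp this with h | h
  · exact hf z h
  · exact hg z h

lemma RFStable.zero : RFStable (0 : RatFunc ℝ) := by
  intro z hz
  simp [RatFunc.denom_zero] at hz

lemma RFStable.sum {ι : Type*} (s : Finset ι) (f : ι → RatFunc ℝ)
    (hf : ∀ i ∈ s, RFStable (f i)) : RFStable (∑ i ∈ s, f i) := by
  classical
  induction s using Finset.induction_on with
  | empty => simpa using RFStable.zero
  | insert a s' hne ih =>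
    rw [Finset.sum_insert hne]
    exact (hf a (Finset.mem_insert_self a s')).add
      (ih fun i hi => hf i (Finset.mem_insert_of_mem hi))

/-- **Failure of internal stability for the state-iteration-based
implementation (Theorem 5).** The closed-loop map from the input disturbance
`w` to the controller state `β` equals `G − N·Y_Q`; if `G` has an unstable pole
while `N` and `Y_Q` are stable, then this closed-loop map has an unstable
pole. -/
theorem state_iteration_implementation_unstable {m p : ℕ}
    (G : Matrix (Fin p) (Fin m) (RatFunc ℝ))
    (M : Matrix (Fin m) (Fin m) (RatFunc ℝ)) (N : Matrix (Fin p) (Fin m) (RatFunc ℝ))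
    (Mt : Matrix (Fin p) (Fin p) (RatFunc ℝ)) (Nt : Matrix (Fin p) (Fin m) (RatFunc ℝ))
    (X : Matrix (Fin m) (Fin p) (RatFunc ℝ)) (Y : Matrix (Fin m) (Fin m) (RatFunc ℝ))
    (Xt : Matrix (Fin m) (Fin p) (RatFunc ℝ)) (Yt : Matrix (Fin p) (Fin p) (RatFunc ℝ))
    (hMinv : IsUnit M) (hMtinv : IsUnit Mt)
    (hGr : G = N * M⁻¹) (hGl : G = Mt⁻¹ * Nt)
    (hBez : Matrix.fromBlocks Y X (-Nt) Mt * Matrix.fromBlocks M (-Xt) N Yt = 1)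
    (Q : Matrix (Fin m) (Fin p) (RatFunc ℝ))
    (XQ : Matrix (Fin m) (Fin p) (RatFunc ℝ)) (hXQ : XQ = X + Q * Mt)
    (YQ : Matrix (Fin m) (Fin m) (RatFunc ℝ)) (hYQ : YQ = Y - Q * Nt)
    (XtQ : Matrix (Fin m) (Fin p) (RatFunc ℝ)) (hXtQ : XtQ = Xt + M * Q)
    (YtQ : Matrix (Fin p) (Fin p) (RatFunc ℝ)) (hYtQ : YtQ = Yt - N * Q)
    (hYtQinv : IsUnit YtQ)
    (Ω : Matrix (Fin p) (Fin p) (RatFunc ℝ))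
    (hΩ : Ω = Matrix.diagonal fun i => (YtQ * Mt) i i)
    (hΩinv : IsUnit Ω)
    (z β : Fin p → RatFunc ℝ) (u w : Fin m → RatFunc ℝ)
    (heq1 : (YtQ * Mt).mulVec z + (YtQ * Nt).mulVec u = -((YtQ * Nt).mulVec w))
    (heq2 : (Ω⁻¹ * ((1 : Matrix (Fin p) (Fin p) (RatFunc ℝ)) - YtQ * Mt)).mulVec z +
      (Ω⁻¹ * (YtQ * Mt)).mulVec β = 0)
    (heq3 : (XtQ * Mt).mulVec z - (XtQ * Mt).mulVec β - u = 0) :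
    β = (G - N * YQ).mulVec w ∧
    ((MatStable N ∧ MatStable YQ ∧
      (∃ (i : Fin p) (j : Fin m) (s : ℂ), 0 ≤ s.re ∧ aeval s ((G i j).denom) = 0)) →
     ∃ (i : Fin p) (j : Fin m) (s : ℂ), 0 ≤ s.re ∧
       aeval s (((G - N * YQ) i j).denom) = 0) := by
  -- invertibility facts
  have hYdet : IsUnit YtQ.det := (Matrix.isUnit_iff_isUnit_det _).mp hYtQinv
  have hΩdet : IsUnit Ω.det := (Matrix.isUnit_iff_isUnit_det _).mp hΩinv
  have hMtdet : IsUnit Mt.det := (Matrix.isUnit_iff_isUnit_det _).mp hMtinv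
  -- Bezout block identities
  have hB := hBez
  rw [Matrix.fromBlocks_multiply, ← Matrix.fromBlocks_one] at hB
  have h21 := congrArg Matrix.toBlocks₂₁ hB
  have h22 := congrArg Matrix.toBlocks₂₂ hB
  simp only [Matrix.toBlocks_fromBlocks₂₁, Matrix.toBlocks_fromBlocks₂₂] at h21 h22
  have hMtN : Mt * N = Nt * M := by
    have h : -Nt * M + Mt * N = (0 : Matrix (Fin p) (Fin m) (RatFunc ℝ)) := h21
    rw [Matrix.neg_mul] at h
    have e : Mt * N - Nt * M = -(Nt * M) + Mt * N := by abel
    exact sub_eq_zero.mp (by rw [e, h])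
  have hb22 : Nt * Xt + Mt * Yt = 1 := by
    have h : -Nt * -Xt + Mt * Yt = (1 : Matrix (Fin p) (Fin p) (RatFunc ℝ)) := h22
    rwa [Matrix.neg_mul, Matrix.mul_neg, neg_neg] at h
  -- reversed Bezout identity
  have hBez' := _root_.mul_eq_one_comm.mp hBez
  rw [Matrix.fromBlocks_multiply, ← Matrix.fromBlocks_one] at hBez'
  have h21' := congrArg Matrix.toBlocks₂₁ hBez'
  simp only [Matrix.toBlocks_fromBlocks₂₁] at h21'
  have hNY : N * Y = Yt * Nt := by
    have h : N * Y + Yt * -Nt = (0 : Matrix (Fin p) (Fin m) (RatFunc ℝ)) := h21'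
    rw [Matrix.mul_neg] at h
    have e : N * Y - Yt * Nt = N * Y + -(Yt * Nt) := by abel
    exact sub_eq_zero.mp (by rw [e, h])
  -- key matrix identities
  have key1 : Mt * YtQ + Nt * XtQ = 1 := by
    rw [hYtQ, hXtQ]
    simp only [Matrix.mul_sub, Matrix.mul_add]
    rw [← Matrix.mul_assoc, ← Matrix.mul_assoc, hMtN, ← hb22]
    abel
  have key2 : YtQ * Nt = N * YQ := by
    rw [hYtQ, hYQ]
    simp only [Matrix.sub_mul, Matrix.mul_sub]
    rw [hNY, Matrix.mul_assoc]
  set A := YtQ * Mt with hA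
  have hΩΩ : Ω * Ω⁻¹ = 1 := Matrix.mul_nonsing_inv _ hΩdet
  have e2 : ((1 : Matrix (Fin p) (Fin p) (RatFunc ℝ)) - A).mulVec z + A.mulVec β = 0 := by
    have h := congrArg (fun x => Ω.mulVec x) heq2
    simp only [Matrix.mulVec_add, Matrix.mulVec_mulVec, Matrix.mulVec_zero] at h
    rw [← Matrix.mul_assoc, ← Matrix.mul_assoc, hΩΩ, Matrix.one_mul, Matrix.one_mul] at h
    exact h
  have hYY : YtQ⁻¹ * YtQ = 1 := Matrix.nonsing_inv_mul _ hYdet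
  have e1 : Mt.mulVec z + Nt.mulVec u = -(Nt.mulVec w) := by
    have h := congrArg (fun x => YtQ⁻¹.mulVec x) heq1
    simp only [Matrix.mulVec_add, Matrix.mulVec_mulVec, Matrix.mulVec_neg] at h
    rw [← Matrix.mul_assoc, ← Matrix.mul_assoc, hYY, Matrix.one_mul, Matrix.one_mul] at h
    exact h
  have hu : u = (XtQ * Mt).mulVec z - (XtQ * Mt).mulVec β :=
    (sub_eq_zero.mp heq3).symm
  have hz2 : A.mulVec z - A.mulVec β = z := by
    have h := e2
    rw [Matrix.sub_mulVec, Matrix.one_mulVec] at h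
    have h' : z - (A.mulVec z - A.mulVec β) = 0 := by rw [← h]; abel
    exact (sub_eq_zero.mp h').symm
  have key1' : Mt * A + Nt * (XtQ * Mt) = Mt := by
    rw [hA, ← Matrix.mul_assoc, ← Matrix.mul_assoc, ← Matrix.add_mul, key1, Matrix.one_mul]
  have hMv : Mt.mulVec z - Mt.mulVec β = -(Nt.mulVec w) := by
    have h1 : Mt.mulVec z = (Mt * A).mulVec z - (Mt * A).mulVec β := by
      conv_lhs => rw [← hz2]
      rw [Matrix.mulVec_sub, Matrix.mulVec_mulVec, Matrix.mulVec_mulVec]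
    have h2 : Nt.mulVec u = (Nt * (XtQ * Mt)).mulVec z - (Nt * (XtQ * Mt)).mulVec β := by
      rw [hu, Matrix.mulVec_sub, Matrix.mulVec_mulVec, Matrix.mulVec_mulVec]
    have h4 : (Mt * A).mulVec z + (Nt * (XtQ * Mt)).mulVec z = Mt.mulVec z := by
      rw [← Matrix.add_mulVec, key1']
    have h5 : (Mt * A).mulVec β + (Nt * (XtQ * Mt)).mulVec β = Mt.mulVec β := by
      rw [← Matrix.add_mulVec, key1']
    have h3 : ((Mt * A).mulVec z - (Mt * A).mulVec β)
        + ((Nt * (XtQ * Mt)).mulVec z - (Nt * (XtQ * Mt)).mulVec β) = -(Nt.mulVec w) := by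
      rw [← h1, ← h2]; exact e1
    rw [← h4, ← h5, ← h3]; abel
  have hMMt : Mt * Mt⁻¹ = 1 := Matrix.mul_nonsing_inv _ hMtdet
  have hMtMt : Mt⁻¹ * Mt = 1 := Matrix.nonsing_inv_mul _ hMtdet
  have hv : z - β = -(G.mulVec w) := by
    have h := congrArg (fun x => Mt⁻¹.mulVec x) hMv
    simp only [Matrix.mulVec_sub, Matrix.mulVec_mulVec, Matrix.mulVec_neg] at h
    rw [hMtMt, Matrix.one_mulVec, Matrix.one_mulVec] at h
    rw [hGl]
    exact h
  have hAG : A * G = N * YQ := by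
    rw [hGl, hA, Matrix.mul_assoc, ← Matrix.mul_assoc Mt, hMMt, Matrix.one_mul]
    exact key2
  have part1 : β = (G - N * YQ).mulVec w := by
    rw [Matrix.sub_mulVec, ← hAG, ← Matrix.mulVec_mulVec]
    have hg : G.mulVec w = β - z := by rw [← neg_sub z β, hv, neg_neg]
    rw [hg, Matrix.mulVec_sub]
    have e : (β - z) - (A.mulVec β - A.mulVec z) = (β - z) + (A.mulVec z - A.mulVec β) := by
      abel
    rw [e, hz2]
    abel
  refine ⟨part1, ?_⟩
  rintro ⟨hN, hYQ', ⟨i, j, s, hs, hden⟩⟩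
  by_contra hcon
  push_neg at hcon
  have hstab : MatStable (G - N * YQ) := by
    intro a b zz hzz
    by_contra hlt
    push_neg at hlt
    exact hcon a b zz hlt hzz
  have hNYs : MatStable (N * YQ) := by
    intro a b
    rw [Matrix.mul_apply]
    exact RFStable.sum _ _ (fun k _ => (hN a k).mul (hYQ' k b))
  have hG : RFStable (G i j) := by
    have e : G i j = (G - N * YQ) i j + (N * YQ) i j := by simp [Matrix.sub_apply]
    rw [e]
    exact (hstab i j).add (hNYs i j)
  have := hG s hden
  linarith
end
end
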